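/- There is no closed half-space K∞ ⊆ R^2 such that K∞ intersects both of the unit cubes centered at (−1/2,1/2) and (1/2,−1/2) (i.e., (−1/2,1/2)+[−1/2,1/2]^2 and (1/2,−1/2)+[−1/2,1/2]^2) but is disjoint from both of the unit cubes centered at (1/2,1/2) and (−1/2,−1/2). -/
import Mathlib


open RealInnerProductSpace

/-- The closed unit cube in `ℝ²` centered at `(c₁, c₂)`. -/
def unitCube (c₁ c₂ : ℝ) : Set (EuclideanSpace ℝ (Fin 2)) :=
  {x | |x 0 - c₁| ≤ 1/2 ∧ |x 1 - c₂| ≤ 1/2}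

set_option maxHeartbeats 1000000 in
/-- There is no closed half-space `K∞ ⊆ ℝ²` meeting both of the unit cubes centered
at `(-1/2, 1/2)` and `(1/2, -1/2)` while being disjoint from both of the unit cubes
centered at `(1/2, 1/2)` and `(-1/2, -1/2)`. -/
theorem stmt7 :
    ¬ ∃ (n : EuclideanSpace ℝ (Fin 2)) (c : ℝ), ‖n‖ = 1 ∧
      ({x : EuclideanSpace ℝ (Fin 2) | ⟪x, n⟫ ≤ c} ∩ unitCube (-1/2) (1/2)).Nonempty ∧
      ({x : EuclideanSpace ℝ (Fin 2) | ⟪x, n⟫ ≤ c} ∩ unitCube (1/2) (-1/2)).Nonempty ∧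
      ({x : EuclideanSpace ℝ (Fin 2) | ⟪x, n⟫ ≤ c} ∩ unitCube (1/2) (1/2)) = ∅ ∧
      ({x : EuclideanSpace ℝ (Fin 2) | ⟪x, n⟫ ≤ c} ∩ unitCube (-1/2) (-1/2)) = ∅ := by
  rintro ⟨n, c, -, ⟨a, ha, haA⟩, ⟨b, hb, hbB⟩, hC, hD⟩
  simp only [Set.mem_setOf_eq] at ha hb
  obtain ⟨haA0, haA1⟩ := haA
  obtain ⟨hbB0, hbB1⟩ := hbB
  rw [abs_le] at haA0 haA1 hbB0 hbB1
  -- a 0 ∈ [-1,0], a 1 ∈ [0,1], b 0 ∈ [0,1], b 1 ∈ [-1,0]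
  have ha0 : -1 ≤ a 0 ∧ a 0 ≤ 0 := by constructor <;> linarith [haA0.1, haA0.2]
  have ha1 : 0 ≤ a 1 ∧ a 1 ≤ 1 := by constructor <;> linarith [haA1.1, haA1.2]
  have hb0 : 0 ≤ b 0 ∧ b 0 ≤ 1 := by constructor <;> linarith [hbB0.1, hbB0.2]
  have hb1 : -1 ≤ b 1 ∧ b 1 ≤ 0 := by constructor <;> linarith [hbB1.1, hbB1.2]
  -- choose t ∈ [0,1] so that the interpolant has first coordinate 0
  have hden : a 0 - b 0 ≤ 0 := by linarith [ha0.2, hb0.1]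
  by_cases heq : a 0 - b 0 = 0
  · -- then a 0 = 0 and a ∈ top-right cube
    have h0 : a 0 = 0 := by linarith [ha0.2, hb0.1]
    have : a ∈ ({x : EuclideanSpace ℝ (Fin 2) | ⟪x, n⟫ ≤ c} ∩ unitCube (1/2) (1/2)) := by
      refine ⟨ha, ?_, ?_⟩ <;> rw [abs_le] <;> constructor <;> linarith [ha1.1, ha1.2]
    rw [hC] at this
    exact this
  · have hdlt : a 0 - b 0 < 0 := lt_of_le_of_ne hden heq
    obtain ⟨t, ht⟩ : ∃ t : ℝ, t = a 0 / (a 0 - b 0) := ⟨_, rfl⟩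
    have ht0 : 0 ≤ t := by
      rw [ht, div_nonneg_iff]
      right; exact ⟨ha0.2, hden⟩
    have ht1 : t ≤ 1 := by
      rw [ht, div_le_one_iff]
      right; right
      exact ⟨hdlt, by linarith [hb0.1]⟩
    obtain ⟨p, hp⟩ : ∃ p : EuclideanSpace ℝ (Fin 2), p = (1 - t) • a + t • b := ⟨_, rfl⟩
    have hp0 : p 0 = 0 := by
      have : t * (a 0 - b 0) = a 0 := by rw [ht]; exact div_mul_cancel₀ _ heq
      simp only [hp, PiLp.add_apply, PiLp.smul_apply, smul_eq_mul]
      nlinarith [this]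
    have e1 : p 1 = (1 - t) * a 1 + t * b 1 := by
      simp only [hp, PiLp.add_apply, PiLp.smul_apply, smul_eq_mul]
    have hpH : ⟪p, n⟫ ≤ c := by
      rw [hp, inner_add_left, real_inner_smul_left, real_inner_smul_left]
      have h1 := mul_le_mul_of_nonneg_left ha (by linarith : (0:ℝ) ≤ 1 - t)
      have h2 := mul_le_mul_of_nonneg_left hb ht0
      linarith
    clear hp ht
    have k1 := mul_nonneg (by linarith : (0:ℝ) ≤ 1 - t) (by linarith [ha1.1] : (0:ℝ) ≤ a 1 + 1)
    have k2 := mul_nonneg ht0 (by linarith [hb1.1] : (0:ℝ) ≤ b 1 + 1)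
    have k3 := mul_nonneg (by linarith : (0:ℝ) ≤ 1 - t) (by linarith [ha1.2] : (0:ℝ) ≤ 1 - a 1)
    have k4 := mul_nonneg ht0 (by linarith [hb1.2] : (0:ℝ) ≤ 1 - b 1)
    have hp1lb : -1 ≤ p 1 := by rw [e1]; nlinarith [k1, k2]
    have hp1ub : p 1 ≤ 1 := by rw [e1]; nlinarith [k3, k4]
    by_cases hsign : 0 ≤ p 1
    · have : p ∈ ({x : EuclideanSpace ℝ (Fin 2) | ⟪x, n⟫ ≤ c} ∩ unitCube (1/2) (1/2)) := by
        refine ⟨hpH, ?_, ?_⟩ <;> rw [abs_le] <;> constructor <;> linarith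
      rw [hC] at this
      exact this
    · have : p ∈ ({x : EuclideanSpace ℝ (Fin 2) | ⟪x, n⟫ ≤ c} ∩ unitCube (-1/2) (-1/2)) := by
        refine ⟨hpH, ?_, ?_⟩ <;> rw [abs_le] <;> constructor <;> linarith
      rw [hD] at this
      exact this
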